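/- Let X be a convex body in ℝ³ and m an interior point of X. Define M(X) = ∫_{P_m} ‖y − m‖^{−2} dy, where P_m = {m + t·p_m(w)·w : t ∈ [0,1), w ∈ S²} is the region bounded by the pedal surface of X with respect to m, and p_m(w) = sup_{x ∈ X} ⟨x − m, w⟩. Then M(X) does not depend on the choice of interior point m. -/

import Mathlib

/-!
In polar coordinates about `m` the volume element `r ^ 2 dr dσ` cancels the weight
`‖y - m‖⁻²`, so the integral over `P_m` is `∫_{S²} p_m dσ`. Since `p_m w = h w - ⟪m, w⟫` with `h`
the support function of `X`, and `⟪m, ·⟫` integrates to zero over the sphere by antipodal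
symmetry, the integral equals `∫_{S²} h dσ`, which does not involve `m`.
-/

open MeasureTheory Set Metric Module
open scoped RealInnerProductSpace ENNReal Pointwise

section SupportFunction

variable {E : Type*} [NormedAddCommGroup E] [InnerProductSpace ℝ E] {X : Set E}

noncomputable def supportFun (X : Set E) (w : E) : ℝ :=
  sSup ((fun x => ⟪x, w⟫) '' X)

lemma bddAbove_image_inner (hX : Bornology.IsBounded X) (w : E) :
    BddAbove ((fun x => ⟪x, w⟫) '' X) := by
  obtain ⟨R, hR⟩ := hX.exists_norm_le
  refine ⟨R * ‖w‖, ?_⟩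
  rintro _ ⟨x, hx, rfl⟩
  exact (real_inner_le_norm x w).trans (by gcongr; exact hR x hx)

lemma inner_le_supportFun (hX : Bornology.IsBounded X) {x : E} (hx : x ∈ X) (w : E) :
    ⟪x, w⟫ ≤ supportFun X w :=
  le_csSup (bddAbove_image_inner hX w) (mem_image_of_mem _ hx)

lemma sSup_image_inner_sub (hX : Bornology.IsBounded X) (hne : X.Nonempty) (m w : E) :
    sSup ((fun x => ⟪x - m, w⟫) '' X) = supportFun X w - ⟪m, w⟫ := by
  have : (fun x => ⟪x - m, w⟫) '' X = (· - ⟪m, w⟫) '' ((fun x => ⟪x, w⟫) '' X) := by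
    rw [image_image]
    exact image_congr fun x _ => inner_sub_left x m w
  rw [this, supportFun]
  exact ((OrderIso.subRight ⟪m, w⟫).map_csSup' (hne.image _) (bddAbove_image_inner hX w)).symm

lemma inner_lt_supportFun (hX : Bornology.IsBounded X) {m : E} (hm : m ∈ interior X)
    {w : E} (hw : w ≠ 0) : ⟪m, w⟫ < supportFun X w := by
  obtain ⟨ε, hε, hball⟩ := Metric.isOpen_iff.1 isOpen_interior m hm
  set δ := ε / 2 / ‖w‖
  have hδ : 0 < δ := by positivity
  have hmem : m + δ • w ∈ X := by
    refine interior_subset (hball ?_)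
    rw [mem_ball, dist_self_add_left, norm_smul, Real.norm_of_nonneg hδ.le,
      div_mul_cancel₀ _ (norm_ne_zero_iff.2 hw)]
    linarith
  calc ⟪m, w⟫ < ⟪m, w⟫ + δ * ‖w‖ ^ 2 := lt_add_of_pos_right _ (by positivity)
    _ = ⟪m + δ • w, w⟫ := by
      rw [inner_add_left, real_inner_smul_left, real_inner_self_eq_norm_sq]
    _ ≤ supportFun X w := inner_le_supportFun hX hmem w

lemma supportFun_le_supportFun_add (hX : Bornology.IsBounded X) (hne : X.Nonempty) {R : ℝ}
    (hR : ∀ x ∈ X, ‖x‖ ≤ R) (w w' : E) : supportFun X w ≤ supportFun X w' + R * ‖w - w'‖ := by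
  refine csSup_le (hne.image _) ?_
  rintro _ ⟨x, hx, rfl⟩
  calc ⟪x, w⟫ = ⟪x, w'⟫ + ⟪x, w - w'⟫ := by rw [inner_sub_right]; ring
    _ ≤ supportFun X w' + ‖x‖ * ‖w - w'‖ :=
      add_le_add (inner_le_supportFun hX hx w') (real_inner_le_norm x _)
    _ ≤ supportFun X w' + R * ‖w - w'‖ := by gcongr; exact hR x hx

lemma continuous_supportFun (hX : Bornology.IsBounded X) (hne : X.Nonempty) :
    Continuous (supportFun X) := by
  obtain ⟨R, hR⟩ := hX.exists_norm_le
  obtain ⟨x, hx⟩ := hne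
  have hR0 : 0 ≤ R := (norm_nonneg x).trans (hR x hx)
  refine (LipschitzWith.of_le_add_mul R.toNNReal fun w w' => ?_).continuous
  rw [Real.coe_toNNReal R hR0, dist_eq_norm]
  exact supportFun_le_supportFun_add hX ⟨x, hx⟩ hR w w'

end SupportFunction

section StarRegion

variable {E : Type*} [NormedAddCommGroup E] [NormedSpace ℝ E] {ρ : E → ℝ}

def starRegion (c : E) (ρ : E → ℝ) : Set E :=
  {y | ∃ t ∈ Ico (0 : ℝ) 1, ∃ w ∈ sphere (0 : E) 1, y = c + (t * ρ w) • w}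

lemma preimage_const_add_starRegion (c : E) (ρ : E → ℝ) :
    (c + ·) ⁻¹' starRegion c ρ = starRegion 0 ρ := by
  ext z
  simp only [starRegion, mem_preimage, mem_ofPred_eq, add_right_inj, zero_add]

lemma smul_mem_starRegion_zero_iff (hρ : ∀ w ∈ sphere (0 : E) 1, 0 < ρ w) {r : ℝ} (hr : 0 < r)
    {w : E} (hw : ‖w‖ = 1) : r • w ∈ starRegion 0 ρ ↔ r < ρ w := by
  have hρw := hρ w (mem_sphere_zero_iff_norm.2 hw)
  constructor
  · rintro ⟨t, ⟨ht0, ht1⟩, v, hv, hrw⟩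
    rw [zero_add] at hrw
    have hv1 := mem_sphere_zero_iff_norm.1 hv
    have hρv := hρ v hv
    have hnorm : r = t * ρ v := by
      simpa [norm_smul, hw, hv1, abs_of_pos hr, abs_of_nonneg ht0, abs_of_pos hρv]
        using congrArg norm hrw
    have hwv : w = v := by
      rw [hnorm] at hrw
      exact smul_right_injective E (by rw [← hnorm]; exact hr.ne') hrw
    rw [hnorm, hwv]
    nlinarith
  · intro hlt
    exact ⟨r / ρ w, ⟨by positivity, (div_lt_one hρw).2 hlt⟩, w, mem_sphere_zero_iff_norm.2 hw,
      by rw [zero_add, div_mul_cancel₀ _ hρw.ne']⟩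

lemma starRegion_zero_eq [Nontrivial E] (hρ : ∀ w ∈ sphere (0 : E) 1, 0 < ρ w) :
    starRegion 0 ρ = insert 0 {z | ‖z‖ < ρ (‖z‖⁻¹ • z)} := by
  ext z
  rcases eq_or_ne z 0 with rfl | hz
  · obtain ⟨w, hw⟩ := (NormedSpace.sphere_nonempty (x := (0 : E))).2 zero_le_one
    simpa using ⟨0, ⟨le_rfl, one_pos⟩, w, hw, by simp⟩
  · have hz' : 0 < ‖z‖ := norm_pos_iff.2 hz
    have hunit : ‖‖z‖⁻¹ • z‖ = 1 := by
      rw [norm_smul, norm_inv, norm_norm, inv_mul_cancel₀ hz'.ne']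
    conv_lhs => rw [← smul_inv_smul₀ hz'.ne' z]
    rw [smul_mem_starRegion_zero_iff hρ hz' hunit]
    simp [hz]

lemma measurableSet_starRegion_zero [Nontrivial E] [MeasurableSpace E] [BorelSpace E]
    (hρm : Measurable ρ) (hρ : ∀ w ∈ sphere (0 : E) 1, 0 < ρ w) :
    MeasurableSet (starRegion 0 ρ) := by
  rw [starRegion_zero_eq hρ]
  exact (measurableSet_lt measurable_norm
    (hρm.comp (measurable_norm.inv.smul measurable_id))).insert 0

end StarRegion

namespace MeasureTheory.Measure

lemma lintegral_volumeIoiPow (n : ℕ) {f : ℝ → ℝ≥0∞} (hf : Measurable f) :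
    ∫⁻ r : Ioi (0 : ℝ), f r ∂volumeIoiPow n = ∫⁻ r in Ioi 0, ENNReal.ofReal (r ^ n) * f r :=
  (lintegral_withDensity_eq_lintegral_mul _ (measurable_subtype_coe.pow_const n).ennreal_ofReal
    (hf.comp measurable_subtype_coe)).trans
    (lintegral_subtype_comap measurableSet_Ioi fun r => ENNReal.ofReal (r ^ n) * f r)

lemma lintegral_volumeIoiPow_indicator_Iio_inv_pow (n : ℕ) (c : ℝ) :
    ∫⁻ r : Ioi (0 : ℝ), (Iio c).indicator (fun r => ENNReal.ofReal (1 / r ^ n)) r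
      ∂volumeIoiPow n = ENNReal.ofReal c := by
  have hf : Measurable fun r : ℝ => ENNReal.ofReal (1 / r ^ n) := by fun_prop
  rw [lintegral_volumeIoiPow n (hf.indicator measurableSet_Iio)]
  calc ∫⁻ r in Ioi 0,
        ENNReal.ofReal (r ^ n) * (Iio c).indicator (fun r => ENNReal.ofReal (1 / r ^ n)) r
      = ∫⁻ r in Ioi 0, (Iio c).indicator 1 r := by
        refine setLIntegral_congr_fun measurableSet_Ioi fun r (hr : 0 < r) => ?_
        by_cases hrc : r ∈ Iio c
        · rw [indicator_of_mem hrc, indicator_of_mem hrc, ← ENNReal.ofReal_mul (by positivity),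
            mul_one_div_cancel (by positivity), ENNReal.ofReal_one, Pi.one_apply]
        · rw [indicator_of_notMem hrc, indicator_of_notMem hrc, mul_zero]
    _ = ENNReal.ofReal c := by
        rw [lintegral_indicator_one measurableSet_Iio, Measure.restrict_apply measurableSet_Iio,
          Iio_inter_Ioi, Real.volume_Ioo, sub_zero]

variable {E : Type*} [NormedAddCommGroup E] [NormedSpace ℝ E] [FiniteDimensional ℝ E]
  [Nontrivial E] [MeasurableSpace E] [BorelSpace E] (μ : Measure E) [μ.IsAddHaarMeasure]

lemma lintegral_eq_lintegral_toSphere_volumeIoiPow {f : E → ℝ≥0∞} (hf : Measurable f) :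
    ∫⁻ z, f z ∂μ = ∫⁻ w : sphere (0 : E) 1, ∫⁻ r : Ioi (0 : ℝ), f ((r : ℝ) • (w : E))
      ∂volumeIoiPow (finrank ℝ E - 1) ∂μ.toSphere := by
  have hg : Measurable fun q : sphere (0 : E) 1 × Ioi (0 : ℝ) => f ((q.2 : ℝ) • (q.1 : E)) :=
    hf.comp ((measurable_subtype_coe.comp measurable_snd).smul
      (measurable_subtype_coe.comp measurable_fst))
  calc ∫⁻ z, f z ∂μ = ∫⁻ z : ({0}ᶜ : Set E), f z ∂μ.comap (↑) := by
        rw [lintegral_subtype_comap (measurableSet_singleton 0).compl, restrict_compl_singleton]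
    _ = ∫⁻ q, f ((q.2 : ℝ) • (q.1 : E)) ∂μ.toSphere.prod (volumeIoiPow (finrank ℝ E - 1)) := by
        rw [← (measurePreserving_homeomorphUnitSphereProd μ).lintegral_comp_emb
          (Homeomorph.measurableEmbedding _)]
        congr with z
        rw [← homeomorphUnitSphereProd_symm_apply_coe, Homeomorph.symm_apply_apply]
    _ = _ := lintegral_prod _ hg.aemeasurable

instance isNegInvariant_toSphere {E : Type*} [NormedAddCommGroup E] [NormedSpace ℝ E]
    [MeasurableSpace E] [BorelSpace E] (μ : Measure E) [μ.IsNegInvariant] :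
    μ.toSphere.IsNegInvariant := by
  refine ⟨Measure.ext fun s hs => ?_⟩
  have hcoe : ((↑) : sphere (0 : E) 1 → E) '' (-s) = -((↑) '' s) :=
    image_neg_of_apply_neg_eq_neg fun _ _ => coe_neg_sphere _
  rw [Measure.neg_apply, toSphere_apply' μ hs.neg, toSphere_apply' μ hs, hcoe, Set.smul_neg,
    measure_neg]

end MeasureTheory.Measure

section StarRegionIntegral

variable {E : Type*} [NormedAddCommGroup E] [NormedSpace ℝ E] [FiniteDimensional ℝ E]
  [Nontrivial E] [MeasurableSpace E] [BorelSpace E] (μ : Measure E) [μ.IsAddHaarMeasure]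
  {ρ : E → ℝ}

lemma lintegral_starRegion_zero (hρm : Measurable ρ) (hρ : ∀ w ∈ sphere (0 : E) 1, 0 < ρ w) :
    ∫⁻ z in starRegion 0 ρ, ENNReal.ofReal (1 / ‖z‖ ^ (finrank ℝ E - 1)) ∂μ
      = ∫⁻ w : sphere (0 : E) 1, ENNReal.ofReal (ρ w) ∂μ.toSphere := by
  have hS := measurableSet_starRegion_zero hρm hρ
  have hf : Measurable fun z : E => ENNReal.ofReal (1 / ‖z‖ ^ (finrank ℝ E - 1)) := by fun_prop
  rw [← lintegral_indicator hS,
    Measure.lintegral_eq_lintegral_toSphere_volumeIoiPow μ (hf.indicator hS)]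
  refine lintegral_congr fun w => ?_
  have hw : ‖(w : E)‖ = 1 := mem_sphere_zero_iff_norm.1 w.2
  rw [← Measure.lintegral_volumeIoiPow_indicator_Iio_inv_pow]
  refine lintegral_congr fun r => ?_
  have hmem := smul_mem_starRegion_zero_iff hρ r.2 hw
  by_cases hr : (r : ℝ) ∈ Iio (ρ w)
  · rw [indicator_of_mem (hmem.2 hr), indicator_of_mem hr, norm_smul, hw, mul_one,
      Real.norm_of_nonneg r.2.le]
  · rw [indicator_of_notMem (mt hmem.1 hr), indicator_of_notMem hr]

lemma setIntegral_starRegion (c : E) (hρm : Measurable ρ)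
    (hρ : ∀ w ∈ sphere (0 : E) 1, 0 < ρ w) :
    ∫ y in starRegion c ρ, 1 / ‖y - c‖ ^ (finrank ℝ E - 1) ∂μ
      = ∫ w : sphere (0 : E) 1, ρ w ∂μ.toSphere := by
  rw [← (measurePreserving_add_left μ c).setIntegral_preimage_emb (measurableEmbedding_addLeft c),
    preimage_const_add_starRegion]
  simp only [add_sub_cancel_left]
  rw [integral_eq_lintegral_of_nonneg_ae (ae_of_all _ fun z => by positivity)
      (by fun_prop : Measurable fun z : E => 1 / ‖z‖ ^ (finrank ℝ E - 1)).aestronglyMeasurable,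
    integral_eq_lintegral_of_nonneg_ae (ae_of_all _ fun w : sphere (0 : E) 1 => (hρ w w.2).le)
      (hρm.comp measurable_subtype_coe).aestronglyMeasurable,
    lintegral_starRegion_zero μ hρm hρ]

end StarRegionIntegral

lemma integral_inner_toSphere_eq_zero {E : Type*} [NormedAddCommGroup E]
    [InnerProductSpace ℝ E] [FiniteDimensional ℝ E] [MeasurableSpace E] [BorelSpace E]
    (μ : Measure E) [μ.IsAddHaarMeasure] (v : E) :
    ∫ w : sphere (0 : E) 1, ⟪v, w⟫ ∂μ.toSphere = 0 := by
  have h := (Measure.measurePreserving_neg μ.toSphere).integral_comp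
    (MeasurableEquiv.neg _).measurableEmbedding fun w : sphere (0 : E) 1 => ⟪v, w⟫
  simp only [coe_neg_sphere, inner_neg_right, integral_neg] at h
  linarith

theorem pedal_integral_indep_of_point_general
    (X : Set (EuclideanSpace ℝ (Fin 3)))
    (hXcomp : IsCompact X)
    (m₁ m₂ : EuclideanSpace ℝ (Fin 3))
    (hm₁ : m₁ ∈ interior X) (hm₂ : m₂ ∈ interior X)
    (p : EuclideanSpace ℝ (Fin 3) → EuclideanSpace ℝ (Fin 3) → ℝ)
    (hp : ∀ m w, p m w = sSup ((fun x => ⟪x - m, w⟫) '' X))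
    (P : EuclideanSpace ℝ (Fin 3) → Set (EuclideanSpace ℝ (Fin 3)))
    (hPdef : ∀ m, P m = {y | ∃ t ∈ Set.Ico (0 : ℝ) 1,
      ∃ w ∈ Metric.sphere (0 : EuclideanSpace ℝ (Fin 3)) 1, y = m + (t * p m w) • w}) :
    ∫ y in P m₁, 1 / ‖y - m₁‖ ^ 2 ∂volume = ∫ y in P m₂, 1 / ‖y - m₂‖ ^ 2 ∂volume := by
  have hX := hXcomp.isBounded
  have hne : X.Nonempty := ⟨m₁, interior_subset hm₁⟩
  have hh : Continuous (supportFun X) := continuous_supportFun hX hne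
  suffices key : ∀ m ∈ interior X, ∫ y in P m, 1 / ‖y - m‖ ^ 2 =
      ∫ w : sphere (0 : EuclideanSpace ℝ (Fin 3)) 1, supportFun X w ∂volume.toSphere by
    rw [key m₁ hm₁, key m₂ hm₂]
  intro m hm
  have hpm : p m = fun w => supportFun X w - ⟪m, w⟫ :=
    funext fun w => by rw [hp, sSup_image_inner_sub hX hne]
  have hpos : ∀ w ∈ sphere (0 : EuclideanSpace ℝ (Fin 3)) 1, 0 < p m w := fun w hw => by
    rw [hpm, sub_pos]
    exact inner_lt_supportFun hX hm (ne_zero_of_mem_unit_sphere ⟨w, hw⟩)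
  have hdim : finrank ℝ (EuclideanSpace ℝ (Fin 3)) - 1 = 2 := by simp
  rw [hPdef, ← hdim, ← starRegion, setIntegral_starRegion volume m
      (hpm ▸ (hh.sub (continuous_const.inner continuous_id)).measurable) hpos, hpm,
    integral_sub, integral_inner_toSphere_eq_zero, sub_zero]
  · exact (hh.comp continuous_subtype_val).integrable_of_hasCompactSupport (.of_compactSpace _)
  · exact (continuous_const.inner continuous_subtype_val).integrable_of_hasCompactSupport
      (.of_compactSpace _)

/-- For a convex body `X ⊂ ℝ³`, the quantity `M(X) = ∫_{P_m} ‖y - m‖⁻² dy`, where `P_m`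
is the region bounded by the pedal surface of `X` with respect to an interior point `m`,
does not depend on the choice of interior point `m`. -/
theorem pedal_integral_indep_of_point
    (X : Set (EuclideanSpace ℝ (Fin 3)))
    (hXconv : Convex ℝ X) (hXcomp : IsCompact X)
    (m₁ m₂ : EuclideanSpace ℝ (Fin 3))
    (hm₁ : m₁ ∈ interior X) (hm₂ : m₂ ∈ interior X)
    (p : EuclideanSpace ℝ (Fin 3) → EuclideanSpace ℝ (Fin 3) → ℝ)
    (hp : ∀ m w, p m w = sSup ((fun x => ⟪x - m, w⟫) '' X))
    (P : EuclideanSpace ℝ (Fin 3) → Set (EuclideanSpace ℝ (Fin 3)))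
    (hPdef : ∀ m, P m = {y | ∃ t ∈ Set.Ico (0 : ℝ) 1,
      ∃ w ∈ Metric.sphere (0 : EuclideanSpace ℝ (Fin 3)) 1, y = m + (t * p m w) • w}) :
    ∫ y in P m₁, 1 / ‖y - m₁‖ ^ 2 ∂volume = ∫ y in P m₂, 1 / ‖y - m₂‖ ^ 2 ∂volume :=
  pedal_integral_indep_of_point_general X hXcomp m₁ m₂ hm₁ hm₂ p hp P hPdef
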